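/- arXiv:2310.02384 — 3 statements merged into one kernel-verified Lean document; each statement's English description precedes it below -/
import Mathlib

section
/- Let f : ℝⁿ → ℝ be γ-strongly convex and differentiable, let G ∈ ℝ^{m×n}, and for λ, λ' ∈ ℝ^m let y = argmin_x (f(x) + ⟨λ, Gx⟩) and y' = argmin_x (f(x) + ⟨λ', Gx⟩). Then ‖y − y'‖ ≤ (‖G‖₂/γ)·‖λ − λ'‖, where ‖G‖₂ is the operator norm of G. -/
open RealInnerProductSpace

/-
The first-order condition at a minimizer of `f + ⟪λ, G ·⟫` identifies `∇f(y)` with the functional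
`v ↦ -⟪λ, G v⟫`, so `⟪∇f(y) - ∇f(y'), y - y'⟫ = ⟪λ' - λ, G (y - y')⟫ ≤ ‖G‖ ‖λ - λ'‖ ‖y - y'‖`.
Adding the strong convexity inequality at `(y, y')` and at `(y', y)` bounds the same inner product
below by `γ ‖y - y'‖²`; dividing by `γ ‖y - y'‖` gives the claim.
-/

section

variable {E : Type*} [NormedAddCommGroup E] [InnerProductSpace ℝ E]

theorem HasGradientAt.inner_eq_neg_of_forall_add_le [CompleteSpace E] {f : E → ℝ}
    {φ : E →L[ℝ] ℝ} {g y : E}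
    (hf : HasGradientAt f g y) (hmin : ∀ x, f y + φ y ≤ f x + φ x) (v : E) :
    ⟪g, v⟫ = -φ v := by
  have hmin_loc : IsLocalMin (fun x => f x + φ x) y := Filter.Eventually.of_forall hmin
  have hderiv := hmin_loc.hasFDerivAt_eq_zero (hf.hasFDerivAt.add φ.hasFDerivAt)
  have hv := congrArg (fun L : E →L[ℝ] ℝ => L v) hderiv
  simp only [add_apply, InnerProductSpace.toDual_apply_apply, zero_apply] at hv
  linarith

theorem mul_norm_sub_sq_le_inner_sub_of_strongConvex {f : E → ℝ} {g : E → E} {γ : ℝ}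
    (hsc : ∀ x y, f x ≥ f y + ⟪g y, x - y⟫ + γ / 2 * ‖x - y‖ ^ 2) (x y : E) :
    γ * ‖x - y‖ ^ 2 ≤ ⟪g x - g y, x - y⟫ := by
  have hxy := hsc x y
  have hyx := hsc y x
  rw [norm_sub_rev y x, ← neg_sub x y, inner_neg_right] at hyx
  rw [inner_sub_left]
  linarith

end

theorem le_div_of_mul_sq_le_mul {γ c t : ℝ} (hγ : 0 < γ) (hc : 0 ≤ c) (ht : 0 ≤ t)
    (h : γ * t ^ 2 ≤ c * t) : t ≤ c / γ := by
  rcases ht.eq_or_lt with rfl | ht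
  · positivity
  · rw [le_div_iff₀ hγ]
    nlinarith

/-- Sensitivity of the minimizer of `f(x) + ⟪λ, G x⟫` with respect to the dual variable. -/
theorem stmt_3 {n m : ℕ}
    (f : EuclideanSpace ℝ (Fin n) → ℝ) (g : EuclideanSpace ℝ (Fin n) → EuclideanSpace ℝ (Fin n))
    (γ : ℝ) (hγ : 0 < γ)
    (hgrad : ∀ x, HasGradientAt f (g x) x)
    (hsc : ∀ x y, f x ≥ f y + ⟪g y, x - y⟫ + γ / 2 * ‖x - y‖ ^ 2)
    (G : EuclideanSpace ℝ (Fin n) →L[ℝ] EuclideanSpace ℝ (Fin m))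
    (l l' : EuclideanSpace ℝ (Fin m)) (y y' : EuclideanSpace ℝ (Fin n))
    (hy : ∀ x, f y + ⟪l, G y⟫ ≤ f x + ⟪l, G x⟫)
    (hy' : ∀ x, f y' + ⟪l', G y'⟫ ≤ f x + ⟪l', G x⟫) :
    ‖y - y'‖ ≤ ‖G‖ / γ * ‖l - l'‖ := by
  have hgy := (hgrad y).inner_eq_neg_of_forall_add_le (φ := (innerSL ℝ l).comp G) hy (y - y')
  have hgy' := (hgrad y').inner_eq_neg_of_forall_add_le (φ := (innerSL ℝ l').comp G) hy' (y - y')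
  have key : γ * ‖y - y'‖ ^ 2 ≤ ‖G‖ * ‖l - l'‖ * ‖y - y'‖ :=
    calc γ * ‖y - y'‖ ^ 2 ≤ ⟪g y - g y', y - y'⟫ :=
          mul_norm_sub_sq_le_inner_sub_of_strongConvex hsc y y'
      _ = ⟪l' - l, G (y - y')⟫ := by
          simp only [inner_sub_left, hgy, hgy', ContinuousLinearMap.comp_apply, innerSL_apply_apply]
          ring
      _ ≤ ‖l' - l‖ * (‖G‖ * ‖y - y'‖) :=
          (real_inner_le_norm _ _).trans (by gcongr; exact G.le_opNorm _)
      _ = ‖G‖ * ‖l - l'‖ * ‖y - y'‖ := by rw [norm_sub_rev]; ring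
  rw [div_mul_eq_mul_div]
  exact le_div_of_mul_sq_le_mul hγ (by positivity) (norm_nonneg _) key
end

section
/- Let G ∈ ℝ^{m×n} with GGᵀ positive definite, γ ≤ β_x real numbers with γ > 0, and define γ_d = λ_min(GGᵀ)/β_x and L_{x*} = √(β_x/(γ·λ_min(GGᵀ))). Then for any ε, ε_g, β_z ≥ 0: (1/(2γ_d))·(εβ_z‖G‖₂/γ + ε_g)·(1 + εβ_z‖G‖₂/γ² + ‖G‖₂²/γ²) ≥ εβ_z/γ + L_{x*}·ε_g. Consequently, the sufficient condition for RDA convergence implies the sufficient condition for RCM convergence. -/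
/-!
By AM-GM the last factor is at least `2‖G‖₂/γ`, which turns the left side into
`(εβ_z/γ)·c + ε_g·(β_x‖G‖₂/(γλ_min))` with `c = β_x‖G‖₂²/(γλ_min)`. Since `γ ≤ β_x` and
`λ_min ≤ ‖G‖₂²`, we have `c ≥ 1`, and `c ≥ 1` is also exactly what makes
`β_x‖G‖₂/(γλ_min)` dominate `L_{x*} = √(β_x/(γλ_min))`.
-/

theorem two_mul_div_le_one_add_sq_div (a b : ℝ) : 2 * a / b ≤ 1 + a ^ 2 / b ^ 2 := by
  have := two_mul_le_add_sq (a / b) 1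
  rw [mul_div_assoc, ← div_pow]
  linarith

theorem Real.sqrt_le_mul_of_one_le_mul_sq {x y : ℝ} (hy : 0 ≤ y) (h : 1 ≤ x * y ^ 2) :
    √x ≤ x * y := by
  have hx : 0 < x := pos_of_mul_pos_left (one_pos.trans_le h) (sq_nonneg y)
  refine Real.sqrt_le_iff.mpr ⟨mul_nonneg hx.le hy, ?_⟩
  nlinarith

/-- The RDA sufficient condition dominates the RCM sufficient condition.
Here `normG` denotes the largest singular value `‖G‖₂` of `G` and `lmin` the smallest
eigenvalue `λ_min(GGᵀ)` of `GGᵀ`, which is positive (`GGᵀ` positive definite) and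
satisfies `lmin ≤ normG²`. -/
theorem stmt_6 (normG lmin γ βx ε εg βz : ℝ)
    (hnormG : 0 ≤ normG) (hlmin : 0 < lmin) (hle : lmin ≤ normG ^ 2)
    (hγ : 0 < γ) (hγβ : γ ≤ βx)
    (hε : 0 ≤ ε) (hεg : 0 ≤ εg) (hβz : 0 ≤ βz) :
    1 / (2 * (lmin / βx)) * (ε * βz * normG / γ + εg) *
        (1 + ε * βz * normG / γ ^ 2 + normG ^ 2 / γ ^ 2)
      ≥ ε * βz / γ + Real.sqrt (βx / (γ * lmin)) * εg := by
  have hβx : 0 < βx := hγ.trans_le hγβ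
  set κ := βx / (γ * lmin)
  have hκ : 1 ≤ κ * normG ^ 2 := by
    rw [div_mul_eq_mul_div, one_le_div (by positivity)]
    exact mul_le_mul hγβ hle hlmin.le hβx.le
  have hfactor : 2 * normG / γ ≤ 1 + ε * βz * normG / γ ^ 2 + normG ^ 2 / γ ^ 2 := by
    have : 0 ≤ ε * βz * normG / γ ^ 2 := by positivity
    linarith [two_mul_div_le_one_add_sq_div normG γ]
  have hcoeff : 0 ≤ 1 / (2 * (lmin / βx)) * (ε * βz * normG / γ + εg) := by
    have := hβx.le
    positivity
  calc ε * βz / γ + √κ * εg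
      ≤ ε * βz / γ * (κ * normG ^ 2) + εg * (κ * normG) := by
        rw [mul_comm √κ]
        gcongr
        · exact le_mul_of_one_le_right (by positivity) hκ
        · exact Real.sqrt_le_mul_of_one_le_mul_sq hnormG hκ
    _ = 1 / (2 * (lmin / βx)) * (ε * βz * normG / γ + εg) * (2 * normG / γ) := by
        simp only [κ]
        field_simp
    _ ≤ _ := mul_le_mul_of_nonneg_left hfactor hcoeff
end

section
/- Let d : ℝ^m → ℝ be γ_d-strongly concave and differentiable, and let λ* satisfy λ* = [λ* + η·∇d(λ*)]₊ (i.e., λ* is a fixed point of projected gradient ascent onto the nonnegative orthant). Let g : ℝ^m → ℝ^m be another vector field with ‖g(λ) − ∇d(λ)‖ ≤ δ for all λ, and suppose ∇d is L_d-Lipschitz. Then for the update λ⁺ = [λ + η·g(λ)]₊: ‖λ⁺ − λ*‖² ≤ (1 − 2ηγ_d + η²L_d²)·‖λ − λ*‖² + (2η + 2η²L_d)·δ·‖λ − λ*‖ + η²δ². -/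
open RealInnerProductSpace

/-! The fixed point `λ*` lets us write `λ* = [λ* + η ∇d(λ*)]₊`, so nonexpansiveness of `[·]₊` bounds
`‖λ⁺ - λ*‖` by `‖x + η u‖ + η δ` with `x = λ - λ*` and `u = ∇d(λ) - ∇d(λ*)`. Adding the strong concavity
inequality at `(λ, λ*)` and `(λ*, λ)` gives `⟪x, u⟫ ≤ -γ_d ‖x‖²`, which together with `‖u‖ ≤ L_d ‖x‖`
bounds `‖x + η u‖²` by `(1 - 2ηγ_d + η²L_d²) ‖x‖²` and `‖x + η u‖` by `(1 + ηL_d) ‖x‖`; squaring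
`‖x + η u‖ + η δ` finishes. -/

lemma norm_sub_le_of_apply_eq_max_zero {ι : Type*} [Fintype ι]
    (P : EuclideanSpace ℝ ι → EuclideanSpace ℝ ι) (hP : ∀ v i, P v i = max (v i) 0)
    (a b : EuclideanSpace ℝ ι) :
    ‖P a - P b‖ ≤ ‖a - b‖ := by
  rw [EuclideanSpace.norm_eq, EuclideanSpace.norm_eq]
  gcongr with i
  simp only [PiLp.sub_apply, hP, Real.norm_eq_abs]
  exact abs_max_sub_max_le_abs _ _ _

section InnerProductSpace

variable {E : Type*} [NormedAddCommGroup E] [InnerProductSpace ℝ E]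

lemma inner_sub_sub_le_neg_mul_norm_sq {f : E → ℝ} {D : E → E} {γ : ℝ}
    (hconc : ∀ a b, f a ≤ f b + ⟪D b, a - b⟫ - γ / 2 * ‖a - b‖ ^ 2) (a b : E) :
    ⟪a - b, D a - D b⟫ ≤ -γ * ‖a - b‖ ^ 2 := by
  have hab := hconc a b
  have hba := hconc b a
  rw [norm_sub_rev b a, ← neg_sub a b, inner_neg_right] at hba
  rw [inner_sub_right, real_inner_comm (D a), real_inner_comm (D b)]
  linarith

lemma norm_add_smul_sq_le {x u : E} {γ L η : ℝ} (hη : 0 ≤ η)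
    (hxu : ⟪x, u⟫ ≤ -γ * ‖x‖ ^ 2) (hu : ‖u‖ ≤ L * ‖x‖) :
    ‖x + η • u‖ ^ 2 ≤ (1 - 2 * η * γ + η ^ 2 * L ^ 2) * ‖x‖ ^ 2 := by
  have hu_sq : ‖u‖ ^ 2 ≤ L ^ 2 * ‖x‖ ^ 2 := by
    rw [← mul_pow]; exact pow_le_pow_left₀ (norm_nonneg u) hu 2
  calc ‖x + η • u‖ ^ 2 = ‖x‖ ^ 2 + 2 * (η * ⟪x, u⟫) + η ^ 2 * ‖u‖ ^ 2 := by
        rw [norm_add_sq_real, real_inner_smul_right, norm_smul, Real.norm_of_nonneg hη, mul_pow]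
    _ ≤ ‖x‖ ^ 2 + 2 * (η * (-γ * ‖x‖ ^ 2)) + η ^ 2 * (L ^ 2 * ‖x‖ ^ 2) := by gcongr
    _ = (1 - 2 * η * γ + η ^ 2 * L ^ 2) * ‖x‖ ^ 2 := by ring

lemma norm_add_smul_le {x u : E} {L η : ℝ} (hη : 0 ≤ η) (hu : ‖u‖ ≤ L * ‖x‖) :
    ‖x + η • u‖ ≤ (1 + η * L) * ‖x‖ :=
  calc ‖x + η • u‖ ≤ ‖x‖ + η * ‖u‖ := by
        simpa [norm_smul, Real.norm_of_nonneg hη] using norm_add_le x (η • u)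
    _ ≤ ‖x‖ + η * (L * ‖x‖) := by gcongr
    _ = (1 + η * L) * ‖x‖ := by ring

end InnerProductSpace

theorem stmt_16_general {m : ℕ}
    (d : EuclideanSpace ℝ (Fin m) → ℝ) (D : EuclideanSpace ℝ (Fin m) → EuclideanSpace ℝ (Fin m))
    (γd Ld δ η : ℝ) (hη : 0 ≤ η)
    (hconc : ∀ a b, d a ≤ d b + ⟪D b, a - b⟫ - γd / 2 * ‖a - b‖ ^ 2)
    (hlip : ∀ a b, ‖D a - D b‖ ≤ Ld * ‖a - b‖)
    (g : EuclideanSpace ℝ (Fin m) → EuclideanSpace ℝ (Fin m))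
    (hg : ∀ l, ‖g l - D l‖ ≤ δ)
    (pos : EuclideanSpace ℝ (Fin m) → EuclideanSpace ℝ (Fin m))
    (hpos : ∀ v i, pos v i = max (v i) 0)
    (lstar l : EuclideanSpace ℝ (Fin m))
    (hfix : lstar = pos (lstar + η • D lstar)) :
    ‖pos (l + η • g l) - lstar‖ ^ 2 ≤
      (1 - 2 * η * γd + η ^ 2 * Ld ^ 2) * ‖l - lstar‖ ^ 2
        + (2 * η + 2 * η ^ 2 * Ld) * δ * ‖l - lstar‖ + η ^ 2 * δ ^ 2 := by
  have hmono := inner_sub_sub_le_neg_mul_norm_sq hconc l lstar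
  have hexact_sq := norm_add_smul_sq_le hη hmono (hlip l lstar)
  have hexact := norm_add_smul_le hη (hlip l lstar)
  have hηδ : 0 ≤ η * δ := mul_nonneg hη ((norm_nonneg _).trans (hg l))
  have hstep : ‖pos (l + η • g l) - lstar‖ ≤ ‖l - lstar + η • (D l - D lstar)‖ + η * δ :=
    calc ‖pos (l + η • g l) - lstar‖
        ≤ ‖(l + η • g l) - (lstar + η • D lstar)‖ := by
          nth_rw 1 [hfix]; exact norm_sub_le_of_apply_eq_max_zero pos hpos _ _
      _ = ‖(l - lstar + η • (D l - D lstar)) + η • (g l - D l)‖ := congrArg norm (by module)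
      _ ≤ _ := by
          grw [norm_add_le, norm_smul, Real.norm_of_nonneg hη, hg l]
  nlinarith [pow_le_pow_left₀ (norm_nonneg _) hstep 2, mul_le_mul_of_nonneg_left hexact hηδ]

/-- Inexact projected gradient ascent contraction for a strongly concave smooth dual function. -/
theorem stmt_16 {m : ℕ}
    (d : EuclideanSpace ℝ (Fin m) → ℝ) (D : EuclideanSpace ℝ (Fin m) → EuclideanSpace ℝ (Fin m))
    (γd Ld δ η : ℝ) (hγd : 0 < γd) (hLd : 0 ≤ Ld) (hδ : 0 ≤ δ) (hη : 0 ≤ η)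
    (hgrad : ∀ l, HasGradientAt d (D l) l)
    (hconc : ∀ a b, d a ≤ d b + ⟪D b, a - b⟫ - γd / 2 * ‖a - b‖ ^ 2)
    (hlip : ∀ a b, ‖D a - D b‖ ≤ Ld * ‖a - b‖)
    (g : EuclideanSpace ℝ (Fin m) → EuclideanSpace ℝ (Fin m))
    (hg : ∀ l, ‖g l - D l‖ ≤ δ)
    (pos : EuclideanSpace ℝ (Fin m) → EuclideanSpace ℝ (Fin m))
    (hpos : ∀ v i, pos v i = max (v i) 0)
    (lstar l : EuclideanSpace ℝ (Fin m))
    (hfix : lstar = pos (lstar + η • D lstar)) :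
    ‖pos (l + η • g l) - lstar‖ ^ 2 ≤
      (1 - 2 * η * γd + η ^ 2 * Ld ^ 2) * ‖l - lstar‖ ^ 2
        + (2 * η + 2 * η ^ 2 * Ld) * δ * ‖l - lstar‖ + η ^ 2 * δ ^ 2 :=
  stmt_16_general d D γd Ld δ η hη hconc hlip g hg pos hpos lstar l hfix
end
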